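/- arXiv:1309.3173 — 2 statements merged into one kernel-verified Lean document; each statement's English description precedes it below -/
import Mathlib

section
/- For Z_i ∈ [0,1], i ∈ A with A nonempty finite, the sum ∑_{i∈A} Z_i is at least 1 - ∏_{i∈A} (1 - (1/2)(1 - √(1 - Z_i²))). -/
lemma weier {ι : Type*} (A : Finset ι) (a : ι → ℝ)
    (h0 : ∀ i ∈ A, 0 ≤ a i) (h1 : ∀ i ∈ A, a i ≤ 1) :
    1 - ∏ i ∈ A, (1 - a i) ≤ ∑ i ∈ A, a i := by
  classical
  induction A using Finset.induction_on with
  | empty => simp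
  | @insert j s hj ih =>
    rw [Finset.prod_insert hj, Finset.sum_insert hj]
    have h0' : ∀ i ∈ s, 0 ≤ a i := fun i hi => h0 i (Finset.mem_insert_of_mem hi)
    have h1' : ∀ i ∈ s, a i ≤ 1 := fun i hi => h1 i (Finset.mem_insert_of_mem hi)
    have hP0 : 0 ≤ ∏ i ∈ s, (1 - a i) :=
      Finset.prod_nonneg fun i hi => by linarith [h1' i hi]
    have hP1 : ∏ i ∈ s, (1 - a i) ≤ 1 :=
      Finset.prod_le_one (fun i hi => by linarith [h1' i hi])
        (fun i hi => by linarith [h0' i hi])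
    have hih := ih h0' h1'
    have haj0 := h0 j (Finset.mem_insert_self j s)
    nlinarith [hih, haj0, hP0, hP1]

/-- For `Z i ∈ [0,1]`, `i ∈ A` with `A` nonempty finite,
`∑_{i∈A} Z i ≥ 1 - ∏_{i∈A} (1 - (1/2)(1 - √(1 - (Z i)²)))`. -/
theorem stmt3 {ι : Type*} (A : Finset ι) (hA : A.Nonempty) (Z : ι → ℝ)
    (hZ0 : ∀ i ∈ A, 0 ≤ Z i) (hZ1 : ∀ i ∈ A, Z i ≤ 1) :
    1 - ∏ i ∈ A, (1 - (1 / 2) * (1 - Real.sqrt (1 - Z i ^ 2))) ≤ ∑ i ∈ A, Z i := by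
  set a : ι → ℝ := fun i => (1 / 2) * (1 - Real.sqrt (1 - Z i ^ 2)) with ha
  have key : ∀ i ∈ A, 0 ≤ a i ∧ a i ≤ 1 ∧ a i ≤ Z i := by
    intro i hi
    have hz0 := hZ0 i hi; have hz1 := hZ1 i hi
    have hnn : 0 ≤ 1 - Z i ^ 2 := by nlinarith
    have hs0 : 0 ≤ Real.sqrt (1 - Z i ^ 2) := Real.sqrt_nonneg _
    have hs1 : Real.sqrt (1 - Z i ^ 2) ≤ 1 := Real.sqrt_le_one.mpr (by nlinarith)
    have hle : 1 - 2 * Z i ≤ Real.sqrt (1 - Z i ^ 2) := by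
      rcases le_or_gt (1 - 2 * Z i) 0 with h | h
      · linarith
      · have := Real.le_sqrt (by linarith : (0:ℝ) ≤ 1 - 2 * Z i) (y := 1 - Z i ^ 2)
        exact (this hnn).mpr (by nlinarith)
    refine ⟨by simp only [ha]; nlinarith, by simp only [ha]; nlinarith, by simp only [ha]; nlinarith⟩
  calc 1 - ∏ i ∈ A, (1 - a i) ≤ ∑ i ∈ A, a i :=
        weier A a (fun i hi => (key i hi).1) (fun i hi => (key i hi).2.1)
    _ ≤ ∑ i ∈ A, Z i := Finset.sum_le_sum fun i hi => (key i hi).2.2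
end

section
/- Define Z_th = (1/k)·(1 - ∏_{i=1}^k (1 - (1/2)(1 - √(1 - Z_i²)))) where each Z_i ∈ [0,1] and k ≥ 1. Then 0 ≤ Z_th ≤ max_i Z_i. -/
open Finset

/-- Weierstrass product inequality. -/
theorem Finset.one_sub_prod_one_sub_le_sum {ι R : Type*} [CommRing R] [LinearOrder R]
    [IsStrictOrderedRing R] (s : Finset ι) {f : ι → R}
    (h0 : ∀ i ∈ s, 0 ≤ f i) (h1 : ∀ i ∈ s, f i ≤ 1) :
    1 - ∏ i ∈ s, (1 - f i) ≤ ∑ i ∈ s, f i := by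
  classical
  induction s using Finset.induction with
  | empty => simp
  | insert a s ha ih =>
    simp only [mem_insert, forall_eq_or_imp] at h0 h1
    have hprod_le_one : ∏ i ∈ s, (1 - f i) ≤ 1 :=
      prod_le_one (fun i hi => sub_nonneg.2 (h1.2 i hi)) fun i hi => sub_le_self _ (h0.2 i hi)
    have := mul_le_of_le_one_right h0.1 hprod_le_one
    rw [prod_insert ha, sum_insert ha]
    linarith [ih h0.2 h1.2]

namespace Real

theorem half_one_sub_sqrt_one_sub_sq_nonneg (z : ℝ) : 0 ≤ 1 / 2 * (1 - √(1 - z ^ 2)) := by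
  have : √(1 - z ^ 2) ≤ 1 := sqrt_le_one.2 (by nlinarith)
  linarith

theorem half_one_sub_sqrt_one_sub_sq_le_one (z : ℝ) : 1 / 2 * (1 - √(1 - z ^ 2)) ≤ 1 := by
  linarith [sqrt_nonneg (1 - z ^ 2)]

theorem half_one_sub_sqrt_one_sub_sq_le {z : ℝ} (hz : 0 ≤ z) : 1 / 2 * (1 - √(1 - z ^ 2)) ≤ z := by
  suffices 1 - 2 * z ≤ √(1 - z ^ 2) by linarith
  rcases le_or_gt (1 - 2 * z) 0 with h | h
  · exact h.trans (sqrt_nonneg _)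
  · -- `(1 - 2z)² ≤ 1 - z²` amounts to `z ≤ 4/5`, which holds as `z < 1/2`.
    exact le_sqrt_of_sq_le (by nlinarith)

end Real

theorem stmt6_general (k : ℕ) (Z : Fin k → ℝ)
    (hZ0 : ∀ i, 0 ≤ Z i)
    (hne : (Finset.univ : Finset (Fin k)).Nonempty) :
    0 ≤ (1 / (k : ℝ)) * (1 - ∏ i, (1 - (1 / 2) * (1 - Real.sqrt (1 - Z i ^ 2)))) ∧
    (1 / (k : ℝ)) * (1 - ∏ i, (1 - (1 / 2) * (1 - Real.sqrt (1 - Z i ^ 2)))) ≤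
      Finset.univ.sup' hne Z := by
  set a : Fin k → ℝ := fun i => 1 / 2 * (1 - √(1 - Z i ^ 2))
  have ha0 (i : Fin k) : 0 ≤ a i := Real.half_one_sub_sqrt_one_sub_sq_nonneg _
  have ha1 (i : Fin k) : a i ≤ 1 := Real.half_one_sub_sqrt_one_sub_sq_le_one _
  have hk : (0 : ℝ) < k := by simpa using hne.card_pos
  constructor
  · have : ∏ i, (1 - a i) ≤ 1 :=
      prod_le_one (fun i _ => sub_nonneg.2 (ha1 i)) fun i _ => sub_le_self _ (ha0 i)
    exact mul_nonneg (by positivity) (sub_nonneg.2 this)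
  · have hsum : ∑ i, a i ≤ k * univ.sup' hne Z := by
      simpa using sum_le_card_nsmul univ a _ fun i _ =>
        (Real.half_one_sub_sqrt_one_sub_sq_le (hZ0 i)).trans (le_sup' Z (mem_univ i))
    rw [one_div_mul_eq_div, div_le_iff₀' hk]
    exact (univ.one_sub_prod_one_sub_le_sum (fun i _ => ha0 i) fun i _ => ha1 i).trans hsum

/-- With `Z_th = (1/k)(1 - ∏_{i=1}^k (1 - (1/2)(1 - √(1 - (Z i)²))))`, each
`Z i ∈ [0,1]` and `k ≥ 1`, we have `0 ≤ Z_th ≤ max_i Z i`. -/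
theorem stmt6 (k : ℕ) (hk : 1 ≤ k) (Z : Fin k → ℝ)
    (hZ0 : ∀ i, 0 ≤ Z i) (hZ1 : ∀ i, Z i ≤ 1)
    (hne : (Finset.univ : Finset (Fin k)).Nonempty) :
    0 ≤ (1 / (k : ℝ)) * (1 - ∏ i, (1 - (1 / 2) * (1 - Real.sqrt (1 - Z i ^ 2)))) ∧
    (1 / (k : ℝ)) * (1 - ∏ i, (1 - (1 / 2) * (1 - Real.sqrt (1 - Z i ^ 2)))) ≤
      Finset.univ.sup' hne Z :=
  stmt6_general k Z hZ0 hne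
end
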